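/- arXiv:2511.12523 — 2 statements merged into one kernel-verified Lean document; each statement's English description precedes it below -/
import Mathlib

section
/- Let n ≥ 1 and let R, C ⊆ [n] be nonempty with r = min R and c = min C, and suppose c < r. Then a pair (p,q) ∈ Δ_R × Δ_C is a Nash equilibrium of the restricted game S restricted to R × C if and only if the support of q is contained in {j ∈ C : j < r}. In particular, for every j ∈ C with j < r and every p ∈ Δ_R, (p, e_j) is a Nash equilibrium of the restricted game. -/
open Finset

/-- The matrix `S`: `S i j = 1` if `i > j`, `0` if `i = j`, `-1` if `i < j`. -/
def Smat (n : ℕ) : Matrix (Fin n) (Fin n) ℝ := fun i j =>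
  if j < i then 1 else if i = j then 0 else -1

/-- `Δ_R`: probability vectors on `Fin n` with support contained in `R`. -/
def simplexOn {n : ℕ} (R : Finset (Fin n)) : Set (Fin n → ℝ) :=
  {p | (∀ i, 0 ≤ p i) ∧ (∑ i, p i = 1) ∧ ∀ i, i ∉ R → p i = 0}

/-- Bilinear payoff `pᵀ M q`. -/
def payoff {n : ℕ} (M : Matrix (Fin n) (Fin n) ℝ) (p q : Fin n → ℝ) : ℝ :=
  ∑ i, ∑ j, p i * M i j * q j

/-- Nash equilibrium of the game `S` restricted to `R × C`
(row player minimizes, column player maximizes). -/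
def IsRestrictedNE {n : ℕ} (R C : Finset (Fin n)) (p q : Fin n → ℝ) : Prop :=
  p ∈ simplexOn R ∧ q ∈ simplexOn C ∧
  (∀ p' ∈ simplexOn R, payoff (Smat n) p q ≤ payoff (Smat n) p' q) ∧
  (∀ q' ∈ simplexOn C, payoff (Smat n) p q' ≤ payoff (Smat n) p q)

lemma Smat_le_one {n : ℕ} (i j : Fin n) : Smat n i j ≤ 1 := by
  unfold Smat; split_ifs <;> norm_num

lemma Smat_of_lt {n : ℕ} {i j : Fin n} (h : j < i) : Smat n i j = 1 := by
  simp [Smat, h]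

lemma Smat_nonpos {n : ℕ} {i j : Fin n} (h : i ≤ j) : Smat n i j ≤ 0 := by
  unfold Smat
  split_ifs with h1 h2
  · exact absurd h1 (not_lt.2 h)
  · norm_num
  · norm_num

lemma payoff_le_one {n : ℕ} {p q : Fin n → ℝ} (hp : ∀ i, 0 ≤ p i) (hq : ∀ j, 0 ≤ q j)
    (hps : ∑ i, p i = 1) (hqs : ∑ j, q j = 1) : payoff (Smat n) p q ≤ 1 := by
  unfold payoff
  have h1 : ∑ i, ∑ j, p i * Smat n i j * q j ≤ ∑ i, ∑ j, p i * q j := by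
    apply Finset.sum_le_sum; intro i _
    apply Finset.sum_le_sum; intro j _
    have := mul_le_mul_of_nonneg_right (mul_le_mul_of_nonneg_left (Smat_le_one i j) (hp i)) (hq j)
    simpa using this
  calc ∑ i, ∑ j, p i * Smat n i j * q j ≤ ∑ i, ∑ j, p i * q j := h1
    _ = 1 := by simp [← Finset.mul_sum, hqs, hps]

lemma payoff_eq_one {n : ℕ} {p q : Fin n → ℝ} (hps : ∑ i, p i = 1) (hqs : ∑ j, q j = 1)
    (h : ∀ i j, p i ≠ 0 → q j ≠ 0 → Smat n i j = 1) : payoff (Smat n) p q = 1 := by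
  unfold payoff
  have key : ∀ i j, p i * Smat n i j * q j = p i * q j := by
    intro i j
    by_cases hpi : p i = 0
    · simp [hpi]
    by_cases hqj : q j = 0
    · simp [hqj]
    rw [h i j hpi hqj]; ring
  simp_rw [key]
  simp [← Finset.mul_sum, hqs, hps]

lemma payoff_single_left {n : ℕ} (r : Fin n) (q : Fin n → ℝ) :
    payoff (Smat n) (Pi.single r 1) q = ∑ j, Smat n r j * q j := by
  unfold payoff
  rw [Finset.sum_eq_single r]
  · simp
  · intro i _ hi; simp [Pi.single_apply, hi]
  · simp

lemma single_mem_simplex {n : ℕ} {C : Finset (Fin n)} {j : Fin n} (hj : j ∈ C) :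
    Pi.single j 1 ∈ simplexOn C := by
  refine ⟨?_, ?_, ?_⟩
  · intro i; rw [Pi.single_apply]; split_ifs <;> norm_num
  · simp [Finset.sum_pi_single]
  · intro i hi
    rw [Pi.single_apply]
    split_ifs with h
    · exact absurd (h ▸ hj) hi
    · rfl
lemma NE_of_support {n : ℕ} {R C : Finset (Fin n)} (hR : R.Nonempty)
    {p q : Fin n → ℝ} (hp : p ∈ simplexOn R) (hq : q ∈ simplexOn C)
    (hsup : ∀ j, q j ≠ 0 → j < R.min' hR) : IsRestrictedNE R C p q := by
  obtain ⟨hp0, hp1, hpR⟩ := hp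
  obtain ⟨hq0, hq1, hqC⟩ := hq
  have hSmat : ∀ (p' : Fin n → ℝ), (∀ i, i ∉ R → p' i = 0) →
      ∀ i j, p' i ≠ 0 → q j ≠ 0 → Smat n i j = 1 := by
    intro p' hp'R i j hi hj
    have hiR : i ∈ R := by by_contra h; exact hi (hp'R i h)
    exact Smat_of_lt (lt_of_lt_of_le (hsup j hj) (R.min'_le i hiR))
  have hval : payoff (Smat n) p q = 1 := payoff_eq_one hp1 hq1 (hSmat p hpR)
  refine ⟨⟨hp0, hp1, hpR⟩, ⟨hq0, hq1, hqC⟩, ?_, ?_⟩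
  · intro p' ⟨hp'0, hp'1, hp'R⟩
    rw [hval, payoff_eq_one hp'1 hq1 (hSmat p' hp'R)]
  · intro q' ⟨hq'0, hq'1, hq'C⟩
    rw [hval]
    exact payoff_le_one hp0 hq'0 hp1 hq'1

/-- If `c = min C < r = min R`, then `(p, q) ∈ Δ_R × Δ_C` is a Nash equilibrium of the game
`S` restricted to `R × C` iff the support of `q` is contained in `{j ∈ C : j < r}`.
In particular `(p, e_j)` is such an equilibrium for every `j ∈ C` with `j < r` and
every `p ∈ Δ_R`. -/
theorem restrictedNE_S_c_lt_r {n : ℕ} (hn : 1 ≤ n) (R C : Finset (Fin n))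
    (hR : R.Nonempty) (hC : C.Nonempty) (hcr : C.min' hC < R.min' hR) :
    (∀ p q, p ∈ simplexOn R → q ∈ simplexOn C →
      (IsRestrictedNE R C p q ↔ ∀ j, q j ≠ 0 → j ∈ C ∧ j < R.min' hR)) ∧
    (∀ j ∈ C, j < R.min' hR → ∀ p ∈ simplexOn R,
      IsRestrictedNE R C p (Pi.single j 1)) := by
  set r := R.min' hR with hr
  set c := C.min' hC with hc
  constructor
  · intro p q hp hq
    constructor
    · rintro ⟨⟨hp0, hp1, hpR⟩, ⟨hq0, hq1, hqC⟩, hrow, hcol⟩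
      intro j hj
      have hjC : j ∈ C := by by_contra h; exact hj (hqC j h)
      refine ⟨hjC, ?_⟩
      by_contra hjr
      push_neg at hjr  -- r ≤ j
      have hqj : 0 < q j := lt_of_le_of_ne (hq0 j) (Ne.symm hj)
      -- column deviation to e_c gives payoff 1
      have hec : Pi.single c 1 ∈ simplexOn C := single_mem_simplex (C.min'_mem hC)
      have h1 : payoff (Smat n) p (Pi.single c 1) = 1 := by
        apply payoff_eq_one hp1 (by simp [Finset.sum_pi_single])
        intro i j' hi hj'
        have hiR : i ∈ R := by by_contra h; exact hi (hpR i h)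
        have hj'c : j' = c := by
          by_contra h; exact hj' (Pi.single_eq_of_ne h 1)
        subst hj'c
        exact Smat_of_lt (lt_of_lt_of_le hcr (R.min'_le i hiR))
      have hge1 : (1:ℝ) ≤ payoff (Smat n) p q := h1 ▸ hcol _ hec
      -- row deviation to e_r gives payoff ≤ 1 - q j < 1
      have her : Pi.single r 1 ∈ simplexOn R := single_mem_simplex (R.min'_mem hR)
      have h2 : payoff (Smat n) (Pi.single r 1) q ≤ 1 - q j := by
        rw [payoff_single_left]
        have hb : ∀ j' ∈ Finset.univ, Smat n r j' * q j' ≤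
            (if j' = j then 0 else q j') := by
          intro j' _
          by_cases h : j' = j
          · subst h
            simp only [if_pos rfl]
            exact mul_nonpos_of_nonpos_of_nonneg (Smat_nonpos hjr) (hq0 j')
          · rw [if_neg h]
            have := mul_le_mul_of_nonneg_right (Smat_le_one r j') (hq0 j')
            linarith
        calc ∑ j', Smat n r j' * q j' ≤ ∑ j', (if j' = j then 0 else q j') :=
              Finset.sum_le_sum hb
          _ = (∑ j', q j') - q j := by
              have : ∀ j', (if j' = j then (0:ℝ) else q j')
                  = q j' - (if j' = j then q j else 0) := by
                intro j'; split_ifs with h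
                · subst h; ring
                · ring
              simp_rw [this, Finset.sum_sub_distrib]
              simp
          _ = 1 - q j := by rw [hq1]
      have := hrow _ her
      linarith
    · intro hsup
      exact NE_of_support hR hp hq (fun j hj => (hsup j hj).2)
  · intro j hjC hjr p hp
    refine NE_of_support hR hp (single_mem_simplex hjC) ?_
    intro j' hj'
    have : j' = j := by by_contra h; exact hj' (Pi.single_eq_of_ne h 1)
    exact this ▸ hjr
end

section
/- Let n ≥ 2 and 2 ≤ k ≤ n, and let x ∈ ℝⁿ be the k-th row of the matrix U, i.e., xᵢ = 1 for i ≤ k−2, x_{k−1} = 2, x_k = 0, x_{k+1} = −2 (if k+1 ≤ n), and xᵢ = −1 for i > k+1. Let z₁,…,zₙ be i.i.d. random variables uniformly distributed on [−1, 1], and let I be the almost surely unique index maximizing xᵢ + zᵢ. Then P(I = k−1) = 1/2 + (1 − (1/2)^{k−1})/(k−1); in particular P(I = k−1) ≤ 1/2 + 1/(k−1). -/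
open MeasureTheory ProbabilityTheory


noncomputable def mu0 : Measure ℝ := (2 : ENNReal)⁻¹ • volume.restrict (Set.Icc (-1 : ℝ) 1)

lemma mu0_Iio (d : ℝ) : mu0 (Set.Iio d) = ENNReal.ofReal ((min d 1 + 1)/2) := by
  rw [mu0, Measure.smul_apply, Measure.restrict_apply measurableSet_Iio]
  rcases le_or_gt d (-1) with hd | hd
  · have : Set.Iio d ∩ Set.Icc (-1:ℝ) 1 = ∅ := by
      ext t; simp only [Set.mem_inter_iff, Set.mem_Iio, Set.mem_Icc, Set.mem_empty_iff_false]
      constructor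
      · rintro ⟨h1, h2, h3⟩; linarith
      · exact fun h => h.elim
    rw [this]
    have : min d 1 = d := min_eq_left (by linarith)
    rw [this, measure_empty, smul_zero, Eq.comm, ENNReal.ofReal_eq_zero]
    linarith
  · rcases le_or_gt d 1 with hd1 | hd1
    · have : Set.Iio d ∩ Set.Icc (-1:ℝ) 1 = Set.Ico (-1) d := by
        ext t; simp only [Set.mem_inter_iff, Set.mem_Iio, Set.mem_Icc, Set.mem_Ico]
        constructor
        · rintro ⟨h1, h2, h3⟩; exact ⟨h2, h1⟩
        · rintro ⟨h1, h2⟩; exact ⟨h2, h1, by linarith⟩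
      rw [this, Real.volume_Ico, min_eq_left hd1, smul_eq_mul,
        ← ENNReal.ofReal_ofNat, ← ENNReal.ofReal_inv_of_pos two_pos,
        ← ENNReal.ofReal_mul (by positivity)]
      ring_nf
    · have : Set.Iio d ∩ Set.Icc (-1:ℝ) 1 = Set.Icc (-1) 1 := by
        apply Set.inter_eq_right.mpr
        intro t ht; exact lt_of_le_of_lt ht.2 hd1
      rw [this, Real.volume_Icc, min_eq_right (le_of_lt hd1), smul_eq_mul,
        ← ENNReal.ofReal_ofNat, ← ENNReal.ofReal_inv_of_pos two_pos,
        ← ENNReal.ofReal_mul (by positivity)]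
      norm_num

lemma mu0_univ : mu0 Set.univ = 1 := by
  rw [mu0, Measure.smul_apply, Measure.restrict_apply MeasurableSet.univ, Set.univ_inter,
    Real.volume_Icc, smul_eq_mul]
  rw [show (1:ℝ) - (-1) = 2 by norm_num, ← ENNReal.ofReal_ofNat, ← ENNReal.ofReal_inv_of_pos two_pos,
    ← ENNReal.ofReal_mul (by positivity)]
  norm_num

instance : IsProbabilityMeasure mu0 := ⟨mu0_univ⟩

lemma cont_h (m : ℕ) : Continuous fun t : ℝ => ((min (1+t) 1 + 1)/2)^m := by
  apply Continuous.pow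
  apply Continuous.div_const
  exact ((continuous_const.add continuous_id).min continuous_const).add continuous_const

lemma integral_piece (m : ℕ) :
    ∫ t in (-1:ℝ)..0, ((t+2)/2)^m = 2*(1-(1/2:ℝ)^(m+1))/(m+1) := by
  have hm : (0:ℝ) < m + 1 := by positivity
  have hD : ∀ t ∈ Set.uIcc (-1:ℝ) 0,
      HasDerivAt (fun s => (2/((m:ℝ)+1)) * ((s+2)/2)^(m+1)) (((t+2)/2)^m) t := by
    intro t _
    have h1 : HasDerivAt (fun s : ℝ => (s+2)/2) (1/2) t := by
      simpa using ((hasDerivAt_id t).add_const 2).div_const 2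
    have h2 := (h1.pow (m+1)).const_mul (2/((m:ℝ)+1))
    refine HasDerivAt.congr_deriv h2 ?_
    simp only [Nat.add_sub_cancel]; push_cast
    field_simp
  rw [intervalIntegral.integral_eq_sub_of_hasDerivAt hD]
  · norm_num
    ring_nf
  · apply Continuous.intervalIntegrable
    exact (((continuous_id.add continuous_const).div_const 2).pow m)

lemma integral_main (m : ℕ) :
    ∫ t in (-1:ℝ)..1, ((min (1+t) 1 + 1)/2)^m = 1 + 2*(1-(1/2:ℝ)^(m+1))/((m:ℝ)+1) := by
  have hi : ∀ a b : ℝ, IntervalIntegrable (fun t : ℝ => ((min (1+t) 1 + 1)/2)^m) volume a b :=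
    fun a b => (cont_h m).intervalIntegrable a b
  rw [← intervalIntegral.integral_add_adjacent_intervals (hi (-1) 0) (hi 0 1)]
  have e1 : ∫ t in (-1:ℝ)..0, ((min (1+t) 1 + 1)/2)^m = ∫ t in (-1:ℝ)..0, ((t+2)/2)^m := by
    apply intervalIntegral.integral_congr
    intro t ht
    rw [Set.uIcc_of_le (by norm_num : (-1:ℝ) ≤ 0)] at ht
    have : min (1+t) 1 = 1 + t := min_eq_left (by linarith [ht.2])
    simp only [this]; ring_nf
  have e2 : ∫ t in (0:ℝ)..1, ((min (1+t) 1 + 1)/2)^m = ∫ t in (0:ℝ)..1, (1:ℝ) := by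
    apply intervalIntegral.integral_congr
    intro t ht
    rw [Set.uIcc_of_le (by norm_num : (0:ℝ) ≤ 1)] at ht
    have : min (1+t) 1 = 1 := min_eq_right (by linarith [ht.1])
    simp only [this]; norm_num
  rw [e1, e2, integral_piece]
  simp
  ring

lemma card_filter_val_lt (n c : ℕ) (hc : c ≤ n) :
    (Finset.univ.filter fun j : Fin n => (j:ℕ) < c).card = c := by
  have : (Finset.univ.filter fun j : Fin n => (j:ℕ) < c)
      = Finset.map (Fin.castLEEmb hc) Finset.univ := by
    ext j
    simp only [Finset.mem_filter, Finset.mem_univ, true_and, Finset.mem_map,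
      Fin.castLEEmb_apply, Fin.ext_iff, Fin.coe_castLE]
    constructor
    · intro h; exact ⟨⟨j, h⟩, rfl⟩
    · rintro ⟨a, ha⟩; omega
  rw [this, Finset.card_map, Finset.card_univ, Fintype.card_fin]


/-- Let `x` be the `k`-th row of the matrix `U` and let `z i` be i.i.d. uniform on `[-1, 1]`,
and let `I` be the almost surely unique index maximizing `x i + z i`. Then
`P(I = k-1) = 1/2 + (1 - (1/2)^(k-1))/(k-1)`; in particular `P(I = k-1) ≤ 1/2 + 1/(k-1)`
(indices 1-based). -/
theorem prob_argmax_U_row_pred {Ω : Type*} [MeasurableSpace Ω] (P : Measure Ω)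
    [IsProbabilityMeasure P] (n k : ℕ) (hn : 2 ≤ n) (hk2 : 2 ≤ k) (hkn : k ≤ n)
    (x : Fin n → ℝ)
    (hx : ∀ i : Fin n, x i =
      if (i : ℕ) + 1 < k - 1 then 1
      else if (i : ℕ) + 1 = k - 1 then 2
      else if (i : ℕ) + 1 = k then 0
      else if (i : ℕ) + 1 = k + 1 then -2
      else -1)
    (z : Fin n → Ω → ℝ) (hmeas : ∀ i, Measurable (z i))
    (hindep : iIndepFun z P)
    (hunif : ∀ i, Measure.map (z i) P
      = (2 : ENNReal)⁻¹ • volume.restrict (Set.Icc (-1 : ℝ) 1))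
    (I : Ω → Fin n) (hImeas : Measurable I)
    (hI : ∀ᵐ ω ∂P, ∀ j, j ≠ I ω → x j + z j ω < x (I ω) + z (I ω) ω) :
    ∀ i : Fin n, (i : ℕ) + 2 = k →
      P {ω | I ω = i}
        = ENNReal.ofReal (1 / 2 + (1 - (1 / 2 : ℝ) ^ (k - 1)) / ((k : ℝ) - 1)) ∧
      P {ω | I ω = i} ≤ ENNReal.ofReal (1 / 2 + 1 / ((k : ℝ) - 1)) := by
  obtain ⟨n', rfl⟩ : ∃ n', n = n' + 1 := ⟨n - 1, by omega⟩
  intro i hik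
  set m : ℕ := (i : ℕ) with hm
  have hxi : x i = 2 := by
    rw [hx i]
    have h1 : ¬((i:ℕ) + 1 < k - 1) := by omega
    have h2 : (i:ℕ) + 1 = k - 1 := by omega
    simp [h1, h2]
  -- Step 1: reduce to the explicit event
  have step1 : P {ω | I ω = i} = P {ω | ∀ j, j ≠ i → x j + z j ω < x i + z i ω} := by
    apply measure_congr
    filter_upwards [hI] with ω hω
    have : (I ω = i) ↔ (∀ j, j ≠ i → x j + z j ω < x i + z i ω) := by
      constructor
      · intro h j hj
        rw [← h] at hj ⊢
        exact hω j hj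
      · intro h
        by_contra hne
        have h1 := h (I ω) hne
        have h2 := hω i (fun hh => hne hh.symm)
        linarith
    exact eq_iff_iff.mpr this
  -- Step 2: express via the pushforward product measure
  set Z : Ω → (Fin (n'+1) → ℝ) := fun ω j => z j ω with hZ
  have hZmeas : Measurable Z := measurable_pi_lambda _ fun j => hmeas j
  set S : Set (Fin (n'+1) → ℝ) := {v | ∀ j, j ≠ i → x j + v j < x i + v i} with hS
  have hSmeas : MeasurableSet S := by
    have : S = ⋂ j, {v : Fin (n'+1) → ℝ | j ≠ i → x j + v j < x i + v i} := by
      ext v; simp [hS, Set.mem_iInter]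
    rw [this]
    refine MeasurableSet.iInter fun j => ?_
    by_cases hj : j = i
    · simp [hj]
    · have : {v : Fin (n'+1) → ℝ | j ≠ i → x j + v j < x i + v i}
          = {v : Fin (n'+1) → ℝ | x j + v j < x i + v i} := by
        ext v; simp [hj]
      rw [this]
      exact measurableSet_lt (measurable_const.add (measurable_pi_apply j))
        (measurable_const.add (measurable_pi_apply i))
  have hmap : Measure.pi (fun _ : Fin (n'+1) => mu0) = Measure.map Z P := by
    refine Measure.pi_eq fun s hs => ?_
    rw [Measure.map_apply hZmeas (MeasurableSet.univ_pi hs)]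
    have hpre : Z ⁻¹' Set.pi Set.univ s = ⋂ j, z j ⁻¹' s j := by
      ext ω; simp [hZ, Set.mem_pi]
    rw [hpre, hindep.meas_iInter fun j => ⟨s j, hs j, rfl⟩]
    refine Finset.prod_congr rfl fun j _ => ?_
    rw [← Measure.map_apply (hmeas j) (hs j), hunif j]; rfl
  have step2 : P {ω | ∀ j, j ≠ i → x j + z j ω < x i + z i ω}
      = Measure.pi (fun _ : Fin (n'+1) => mu0) S := by
    rw [hmap, Measure.map_apply hZmeas hSmeas]
    rfl
  -- Step 3: Fubini via piFinSuccAbove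
  set T : Set (ℝ × (Fin n' → ℝ)) :=
    {p | ∀ j, x (i.succAbove j) + p.2 j < x i + p.1} with hT
  have hTmeas : MeasurableSet T := by
    have : T = ⋂ j, {p : ℝ × (Fin n' → ℝ) | x (i.succAbove j) + p.2 j < x i + p.1} := by
      ext p; simp [hT, Set.mem_iInter]
    rw [this]
    exact MeasurableSet.iInter fun j => measurableSet_lt
      (measurable_const.add (measurable_snd.eval))
      (measurable_const.add measurable_fst)
  have hpre : (MeasurableEquiv.piFinSuccAbove (fun _ : Fin (n'+1) => ℝ) i) ⁻¹' T = S := by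
    ext v
    simp only [Set.mem_preimage, hT, Set.mem_setOf_eq, hS,
      MeasurableEquiv.piFinSuccAbove_apply]
    constructor
    · intro h j hj
      obtain ⟨j', rfl⟩ := Fin.exists_succAbove_eq (Ne.symm (Ne.symm hj))
      exact h j'
    · intro h j
      exact h (i.succAbove j) (Fin.succAbove_ne i j)
  have step3 : Measure.pi (fun _ : Fin (n'+1) => mu0) S
      = (mu0.prod (Measure.pi fun _ : Fin n' => mu0)) T := by
    rw [← hpre]
    exact (measurePreserving_piFinSuccAbove (fun _ : Fin (n'+1) => mu0) i).measure_preimage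
      hTmeas.nullMeasurableSet
  -- Step 4: slice computation
  have step4 : (mu0.prod (Measure.pi fun _ : Fin n' => mu0)) T
      = ∫⁻ t, (∏ j : Fin n', mu0 (Set.Iio (x i + t - x (i.succAbove j)))) ∂mu0 := by
    rw [Measure.prod_apply hTmeas]
    refine lintegral_congr fun t => ?_
    have : Prod.mk t ⁻¹' T = Set.pi Set.univ fun j => Set.Iio (x i + t - x (i.succAbove j)) := by
      ext w
      simp only [Set.mem_preimage, hT, Set.mem_setOf_eq, Set.mem_pi, Set.mem_univ,
        Set.mem_Iio, true_implies]
      exact forall_congr' fun j => by constructor <;> intro h <;> linarith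
    rw [this, Measure.pi_pi]
  -- Step 5: compute each factor
  have hfac : ∀ t : ℝ, -1 ≤ t → ∀ j : Fin n',
      mu0 (Set.Iio (x i + t - x (i.succAbove j)))
        = if ((i.succAbove j : Fin (n'+1)) : ℕ) < m
          then ENNReal.ofReal ((min (1+t) 1 + 1)/2) else 1 := by
    intro t ht j
    have hne : i.succAbove j ≠ i := Fin.succAbove_ne i j
    by_cases hlt : ((i.succAbove j : Fin (n'+1)) : ℕ) < m
    · have hxs : x (i.succAbove j) = 1 := by
        rw [hx]
        have : ((i.succAbove j : Fin (n'+1)) : ℕ) + 1 < k - 1 := by omega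
        simp [this]
      rw [if_pos hlt, hxs, hxi, show (2:ℝ) + t - 1 = 1 + t by ring, mu0_Iio]
    · have hxs : x (i.succAbove j) ≤ 0 := by
        have h1 : ¬(((i.succAbove j : Fin (n'+1)) : ℕ) + 1 < k - 1) := by omega
        have h2 : ¬(((i.succAbove j : Fin (n'+1)) : ℕ) + 1 = k - 1) := by
          intro h
          exact hne (Fin.ext (by omega))
        rw [hx]
        simp only [h1, h2, if_false]
        split_ifs <;> norm_num
      rw [if_neg hlt, mu0_Iio, min_eq_right (by rw [hxi]; linarith), show (1:ℝ)+1 = 2 by norm_num]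
      simp
  -- Step 6: the product equals a power
  have hprod : ∀ t ∈ Set.Icc (-1:ℝ) 1,
      (∏ j : Fin n', mu0 (Set.Iio (x i + t - x (i.succAbove j))))
        = ENNReal.ofReal (((min (1+t) 1 + 1)/2)^m) := by
    intro t ht
    rw [Finset.prod_congr rfl fun j _ => hfac t ht.1 j]
    have hcond : ∀ j : Fin n', (((i.succAbove j : Fin (n'+1)) : ℕ) < m) ↔ ((j : ℕ) < m) := by
      intro j
      rcases lt_or_ge (j.castSucc) i with h | h
      · rw [Fin.succAbove_of_castSucc_lt _ _ h]
        have := h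
        rw [Fin.lt_iff_val_lt_val, Fin.coe_castSucc] at this
        simp only [Fin.coe_castSucc]
      · rw [Fin.succAbove_of_le_castSucc _ _ h]
        rw [Fin.le_iff_val_le_val, Fin.coe_castSucc] at h
        simp only [Fin.val_succ]
        omega
    rw [Finset.prod_congr rfl fun j _ => if_congr (hcond j) rfl rfl,
      Finset.prod_ite, Finset.prod_const, Finset.prod_const_one, mul_one,
      card_filter_val_lt n' m (by omega)]
    have h0 : (0:ℝ) ≤ (min (1+t) 1 + 1)/2 := by
      have : (0:ℝ) ≤ min (1+t) 1 := le_min (by linarith [ht.1]) (by norm_num)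
      linarith
    rw [← ENNReal.ofReal_pow h0]
  -- Step 7: evaluate the integral
  have hnn : (0:ℝ) ≤ 1 + 2*(1-(1/2:ℝ)^(m+1))/((m:ℝ)+1) := by
    have h1 : (1/2:ℝ)^(m+1) ≤ 1 := pow_le_one₀ (by norm_num) (by norm_num)
    have h2 : (0:ℝ) ≤ 2*(1-(1/2:ℝ)^(m+1))/((m:ℝ)+1) := by
      apply div_nonneg (by linarith) (by positivity)
    linarith
  have step5 : (∫⁻ t, (∏ j : Fin n', mu0 (Set.Iio (x i + t - x (i.succAbove j)))) ∂mu0)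
      = ENNReal.ofReal (1/2 + (1-(1/2:ℝ)^(m+1))/((m:ℝ)+1)) := by
    have hmu : ∀ f : ℝ → ENNReal,
        (∫⁻ t, f t ∂mu0) = 2⁻¹ * ∫⁻ t in Set.Icc (-1:ℝ) 1, f t := by
      intro f; rw [mu0, lintegral_smul_measure, smul_eq_mul]
    have hnn2 : 0 ≤ᵐ[volume.restrict (Set.Icc (-1:ℝ) 1)]
        fun t => ((min (1+t) 1 + 1)/2)^m := by
      refine (ae_restrict_iff' measurableSet_Icc).2 (ae_of_all _ fun t ht => ?_)
      have : (0:ℝ) ≤ min (1+t) 1 := le_min (by linarith [ht.1]) (by norm_num)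
      positivity
    rw [hmu,
      setLIntegral_congr_fun measurableSet_Icc hprod,
      ← ofReal_integral_eq_lintegral_ofReal ((cont_h m).integrableOn_Icc) hnn2,
      MeasureTheory.integral_Icc_eq_integral_Ioc,
      ← intervalIntegral.integral_of_le (by norm_num : (-1:ℝ) ≤ 1), integral_main,
      show (1/2 + (1-(1/2:ℝ)^(m+1))/((m:ℝ)+1))
        = 2⁻¹ * (1 + 2*(1-(1/2:ℝ)^(m+1))/((m:ℝ)+1)) by ring,
      ENNReal.ofReal_mul (by norm_num), ENNReal.ofReal_inv_of_pos two_pos,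
      ENNReal.ofReal_ofNat]
  have hfinal : P {ω | I ω = i}
      = ENNReal.ofReal (1/2 + (1-(1/2:ℝ)^(m+1))/((m:ℝ)+1)) := by
    rw [step1, step2, step3, step4, step5]
  have hk1 : k - 1 = m + 1 := by omega
  have hkr : (k:ℝ) - 1 = (m:ℝ) + 1 := by
    have : k = m + 2 := hik.symm
    subst this
    push_cast
    ring
  rw [hfinal, hk1, hkr]
  constructor
  · norm_num
  · apply ENNReal.ofReal_le_ofReal
    have h1 : (1:ℝ) - (1/2:ℝ)^(m+1) ≤ 1 := by
      have : (0:ℝ) ≤ (1/2:ℝ)^(m+1) := by positivity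
      linarith
    have h2 : (0:ℝ) < (m:ℝ)+1 := by positivity
    gcongr
end
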